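/- arXiv:2502.05427 — 2 statements merged into one kernel-verified Lean document; each statement's English description precedes it below -/
import Mathlib

section
/- Let $\mu$ be a nonzero finite Borel measure on $S^{n-1}$ that is the surface area measure of some convex body $K$ in $\mathbb{R}^n$. Then $\mu$ is not concentrated on any closed hemisphere: for every $u \in S^{n-1}$, $\mu(\{v \in S^{n-1} : v \cdot u > 0\}) > 0$. -/
/-!
Project orthogonally onto the hyperplane `u^⊥`. For an interior point `x` of `K`, the last point
`x + t u` (`t ≥ 0`) of `K` on the ray from `x` in direction `u` lies on the boundary, and a
supporting hyperplane there has a unit outer normal `v` with `⟪v, u⟫ > 0`, because the supporting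
functional increases from `x` to `x + t u`. Hence the boundary points with such a normal project
onto a set containing the projection of `interior K`, which is open and nonempty in `u^⊥`. The
projection is `1`-Lipschitz, so these boundary points have positive `(n - 1)`-dimensional Hausdorff
measure.
-/

open MeasureTheory Topology

open scoped RealInnerProductSpace

section NormedSpace

variable {E : Type*} [NormedAddCommGroup E] [NormedSpace ℝ E] {K : Set E}

theorem IsCompact.exists_nonneg_add_smul_mem_frontier (hK : IsCompact K) {x u : E} (hx : x ∈ K)
    (hu : u ≠ 0) : ∃ t : ℝ, 0 ≤ t ∧ x + t • u ∈ frontier K := by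
  set ray : ℝ → E := fun t => x + t • u
  have hray : IsClosedEmbedding ray :=
    (Homeomorph.addLeft x).isClosedEmbedding.comp (isClosedEmbedding_smul_left hu)
  obtain ⟨t, htK, htmax⟩ := (hray.isCompact_preimage hK).exists_isGreatest
    ⟨0, by simpa [ray] using hx⟩
  refine ⟨t, htmax (by simpa [ray] using hx), subset_closure htK, fun htint => ?_⟩
  have hnhds : ∀ᶠ s in 𝓝[>] t, ray s ∈ interior K := eventually_nhdsWithin_of_eventually_nhds
    ((isOpen_interior.preimage hray.continuous).mem_nhds htint)
  obtain ⟨s, hsK, hts⟩ := (hnhds.and self_mem_nhdsWithin).exists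
  exact (htmax (show ray s ∈ K from interior_subset hsK)).not_gt hts

theorem Convex.exists_supporting_functional (hK : Convex ℝ K) (hint : (interior K).Nonempty)
    {z : E} (hz : z ∉ interior K) :
    ∃ f : StrongDual ℝ E, (∀ y ∈ interior K, f y < f z) ∧ ∀ y ∈ K, f y ≤ f z := by
  obtain ⟨f, hf⟩ := geometric_hahn_banach_open_point hK.interior isOpen_interior hz
  refine ⟨f, hf, fun y hy => ?_⟩
  have hclosure : K ⊆ closure (interior K) := by
    rw [hK.closure_interior_eq_closure_of_nonempty_interior hint]
    exact subset_closure
  exact closure_minimal (fun y hy => (hf y hy).le) (isClosed_le f.continuous continuous_const)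
    (hclosure hy)

end NormedSpace

section InnerProductSpace

variable {E : Type*} [NormedAddCommGroup E] [InnerProductSpace ℝ E]

/-- Schneider's reverse spherical image `τ(K, η)`. -/
def reverseSphericalImage (K η : Set E) : Set E :=
  {x ∈ frontier K | ∃ v ∈ η, ‖v‖ = 1 ∧ ∀ y ∈ K, ⟪y, v⟫ ≤ ⟪x, v⟫}

theorem Convex.exists_unit_normal_inner_pos [CompleteSpace E] {K : Set E} (hK : Convex ℝ K)
    {x u : E} (hx : x ∈ interior K) {t : ℝ} (ht : 0 ≤ t) (hz : x + t • u ∉ interior K) :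
    ∃ v : E, ‖v‖ = 1 ∧ 0 < ⟪v, u⟫ ∧ ∀ y ∈ K, ⟪y, v⟫ ≤ ⟪x + t • u, v⟫ := by
  obtain ⟨f, hf_int, hf_le⟩ := hK.exists_supporting_functional ⟨x, hx⟩ hz
  set w := (InnerProductSpace.toDual ℝ E).symm f
  have hw : ∀ y, ⟪y, w⟫ = f y := fun y => by
    rw [real_inner_comm, InnerProductSpace.toDual_symm_apply]
  have hwu : 0 < ⟪u, w⟫ := by
    have hfx := hf_int x hx
    rw [map_add, map_smul, smul_eq_mul] at hfx
    rw [hw]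
    exact pos_of_mul_pos_right (by linarith) ht
  have hw0 : w ≠ 0 := by rintro hw0; simp [hw0] at hwu
  refine ⟨‖w‖⁻¹ • w, by simp [norm_smul, hw0], ?_, fun y hy => ?_⟩
  · rw [real_inner_smul_left, real_inner_comm]
    positivity
  · simp only [real_inner_smul_right, hw]
    exact mul_le_mul_of_nonneg_left (hf_le y hy) (by positivity)

theorem Convex.exists_add_smul_mem_reverseSphericalImage [CompleteSpace E] {K : Set E}
    (hconv : Convex ℝ K) (hcomp : IsCompact K) {x u : E} (hx : x ∈ interior K) (hu : u ≠ 0) :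
    ∃ t : ℝ, x + t • u ∈ reverseSphericalImage K {v | ‖v‖ = 1 ∧ 0 < ⟪v, u⟫} := by
  obtain ⟨t, ht, hfr⟩ := hcomp.exists_nonneg_add_smul_mem_frontier (interior_subset hx) hu
  obtain ⟨v, hv, hvu, hsupp⟩ := hconv.exists_unit_normal_inner_pos hx ht hfr.2
  exact ⟨t, hfr, v, ⟨hv, hvu⟩, hv, hsupp⟩

/-- Orthogonal projection onto `u^⊥` followed by coordinates in an orthonormal basis of it. -/
theorem exists_lipschitzWith_one_surjective_map_eq_zero {m : ℕ}
    (hE : Module.finrank ℝ E = m + 1) {u : E} (hu : u ≠ 0) :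
    ∃ T : E →L[ℝ] (Fin m → ℝ), LipschitzWith 1 T ∧ Function.Surjective T ∧ T u = 0 := by
  have : Fact (Module.finrank ℝ E = m + 1) := ⟨hE⟩
  set P := (ℝ ∙ u)ᗮ.orthogonalProjectionOnto
  set B := OrthonormalBasis.fromOrthogonalSpanSingleton (𝕜 := ℝ) m hu
  refine ⟨(EuclideanSpace.equiv (Fin m) ℝ).toContinuousLinearMap ∘L
    B.repr.toContinuousLinearEquiv.toContinuousLinearMap ∘L P, ?_, ?_, ?_⟩
  · have hP : LipschitzWith 1 P := P.lipschitz.weaken <| by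
      rw [← NNReal.coe_le_coe, coe_nnnorm]
      exact Submodule.orthogonalProjectionOnto_norm_le _
    have h := (PiLp.lipschitzWith_ofLp 2 _).comp (B.repr.isometry.lipschitz.comp hP)
    rw [one_mul, one_mul] at h
    exact h
  · exact (EuclideanSpace.equiv (Fin m) ℝ).surjective.comp (B.repr.surjective.comp
      fun v => ⟨v, Submodule.orthogonalProjectionOnto_mem_subspace_eq_self v⟩)
  · simp [P, Submodule.orthogonalProjectionOnto_eq_zero_iff, Submodule.mem_span_singleton_self]

end InnerProductSpace

theorem LipschitzWith.hausdorffMeasure_pos_of_isOpen_subset_image {X ι : Type*}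
    [EMetricSpace X] [MeasurableSpace X] [BorelSpace X] [Fintype ι] {T : X → ι → ℝ}
    {C : NNReal} (hT : LipschitzWith C T) {A : Set X} {U : Set (ι → ℝ)} (hU : IsOpen U)
    (hUne : U.Nonempty) (hUA : U ⊆ T '' A) : 0 < μH[Fintype.card ι] A := by
  have hU_pos : 0 < μH[Fintype.card ι] U := by
    rw [hausdorffMeasure_pi_real]
    exact hU.measure_pos volume hUne
  refine pos_iff_ne_zero.2 fun hA => hU_pos.ne' (le_antisymm ?_ bot_le)
  calc μH[Fintype.card ι] U ≤ μH[Fintype.card ι] (T '' A) := measure_mono hUA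
    _ ≤ C ^ (Fintype.card ι : ℝ) * μH[Fintype.card ι] A :=
      hT.hausdorffMeasure_image_le (Nat.cast_nonneg _) A
    _ = 0 := by rw [hA, mul_zero]

theorem surface_area_measure_not_concentrated_general {n : ℕ} (K : Set (EuclideanSpace ℝ (Fin n)))
    (hconv : Convex ℝ K) (hcomp : IsCompact K) (hint : (interior K).Nonempty)
    (S : Measure (EuclideanSpace ℝ (Fin n)))
    (hS : ∀ η : Set (EuclideanSpace ℝ (Fin n)), MeasurableSet η →
      S η = μH[(n : ℝ) - 1]
        {x ∈ frontier K | ∃ v ∈ η, ‖v‖ = 1 ∧ ∀ y ∈ K, (inner ℝ y v : ℝ) ≤ inner ℝ x v}) :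
    ∀ u : EuclideanSpace ℝ (Fin n), ‖u‖ = 1 →
      0 < S {v | ‖v‖ = 1 ∧ 0 < (inner ℝ v u : ℝ)} := by
  intro u hu
  have hu0 : u ≠ 0 := norm_ne_zero_iff.1 (hu ▸ one_ne_zero)
  obtain ⟨m, rfl⟩ : ∃ m, n = m + 1 := Nat.exists_eq_succ_of_ne_zero <| by
    rintro rfl
    exact hu0 (Subsingleton.elim u 0)
  obtain ⟨T, hT_lip, hT_surj, hTu⟩ :=
    exists_lipschitzWith_one_surjective_map_eq_zero finrank_euclideanSpace_fin hu0
  have hη : MeasurableSet {v : EuclideanSpace ℝ (Fin (m + 1)) | ‖v‖ = 1 ∧ 0 < ⟪v, u⟫} :=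
    (measurableSet_eq_fun measurable_norm measurable_const).inter
      (measurableSet_lt (g := fun v => ⟪v, u⟫) measurable_const (by fun_prop))
  rw [hS _ hη, show ((m + 1 : ℕ) : ℝ) - 1 = Fintype.card (Fin m) by simp]
  refine hT_lip.hausdorffMeasure_pos_of_isOpen_subset_image
    (T.isOpenMap hT_surj _ isOpen_interior) (hint.image T) ?_
  rintro _ ⟨x, hx, rfl⟩
  obtain ⟨t, ht⟩ := hconv.exists_add_smul_mem_reverseSphericalImage hcomp hx hu0
  exact ⟨x + t • u, ht, by simp [hTu]⟩

/-- A nonzero surface area measure of a convex body is not concentrated on any closed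
hemisphere: `S({v ∈ Sⁿ⁻¹ : v ⋅ u > 0}) > 0` for every unit vector `u`. -/
theorem surface_area_measure_not_concentrated {n : ℕ} (K : Set (EuclideanSpace ℝ (Fin n)))
    (hconv : Convex ℝ K) (hcomp : IsCompact K) (hint : (interior K).Nonempty)
    (S : Measure (EuclideanSpace ℝ (Fin n)))
    (hS : ∀ η : Set (EuclideanSpace ℝ (Fin n)), MeasurableSet η →
      S η = μH[(n : ℝ) - 1]
        {x ∈ frontier K | ∃ v ∈ η, ‖v‖ = 1 ∧ ∀ y ∈ K, (inner ℝ y v : ℝ) ≤ inner ℝ x v})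
    [IsFiniteMeasure S] (hSne : S ≠ 0) :
    ∀ u : EuclideanSpace ℝ (Fin n), ‖u‖ = 1 →
      0 < S {v | ‖v‖ = 1 ∧ 0 < (inner ℝ v u : ℝ)} :=
  surface_area_measure_not_concentrated_general K hconv hcomp hint S hS
end

section
/- Let $0 < q \le 1$. Then for convex bodies $K, L$ in $\mathbb{R}^n$ containing the origin in their interiors, $\widetilde{V}_q(K + L)^{1/q} \ge \widetilde{V}_q(K)^{1/q} + \widetilde{V}_q(L)^{1/q}$. -/
open MeasureTheory Metric Set Filter Topology Real
open scoped Pointwise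

section Aux

variable {E : Type*} [NormedAddCommGroup E] [NormedSpace ℝ E]

lemma radial_set_eq {C : Set E} (hconv : Convex ℝ C) (hcomp : IsCompact C)
    (h0 : 0 ∈ interior C) {u : E} (hu : u ≠ 0) :
    {t : ℝ | 0 < t ∧ t • u ∈ C} = Set.Ioc 0 (gauge C u)⁻¹ ∧ 0 < gauge C u := by
  have hnhds : C ∈ 𝓝 (0 : E) := mem_interior_iff_mem_nhds.1 h0
  have habs : Absorbent ℝ C := absorbent_nhds_zero hnhds
  have hvb : Bornology.IsVonNBounded ℝ C := by
    rw [NormedSpace.isVonNBounded_iff]; exact hcomp.isBounded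
  have hg : 0 < gauge C u := (gauge_pos habs hvb).2 hu
  refine ⟨?_, hg⟩
  ext t
  simp only [Set.mem_setOf_eq, Set.mem_Ioc]
  constructor
  · rintro ⟨ht, htu⟩
    refine ⟨ht, ?_⟩
    have h1 : gauge C (t • u) ≤ 1 := gauge_le_one_of_mem htu
    rw [gauge_smul_of_nonneg ht.le, smul_eq_mul] at h1
    rw [inv_eq_one_div, le_div_iff₀ hg]
    exact h1
  · rintro ⟨ht, htle⟩
    refine ⟨ht, ?_⟩
    have h1 : gauge C (t • u) ≤ 1 := by
      rw [gauge_smul_of_nonneg ht.le, smul_eq_mul]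
      calc t * gauge C u ≤ (gauge C u)⁻¹ * gauge C u :=
            mul_le_mul_of_nonneg_right htle hg.le
        _ = 1 := inv_mul_cancel₀ hg.ne'
    have := (gauge_le_one_iff_mem_closure hconv hnhds).1 h1
    rwa [hcomp.isClosed.closure_eq] at this

lemma radial_bounds {C : Set E} (hcomp : IsCompact C) (h0 : 0 ∈ interior C) :
    ∃ ε R : ℝ, 0 < ε ∧ 0 < R ∧
      ∀ u : E, ‖u‖ = 1 → 0 < gauge C u ∧ ε ≤ (gauge C u)⁻¹ ∧ (gauge C u)⁻¹ ≤ R := by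
  have hnhds : C ∈ 𝓝 (0 : E) := mem_interior_iff_mem_nhds.1 h0
  have habs : Absorbent ℝ C := absorbent_nhds_zero hnhds
  have hvb : Bornology.IsVonNBounded ℝ C := by
    rw [NormedSpace.isVonNBounded_iff]; exact hcomp.isBounded
  obtain ⟨ε, hε, hball⟩ := Metric.mem_nhds_iff.1 hnhds
  obtain ⟨R, hR, hRsub⟩ := hcomp.isBounded.subset_closedBall_lt 0 0
  refine ⟨ε, R, hε, hR, fun u hu => ?_⟩
  have hu0 : u ≠ 0 := by
    intro h; rw [h, norm_zero] at hu; exact zero_ne_one hu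
  have hg : 0 < gauge C u := (gauge_pos habs hvb).2 hu0
  refine ⟨hg, ?_, ?_⟩
  · have h1 : ε * gauge C u ≤ 1 := by
      have := mul_gauge_le_norm (s := C) (x := u) hball
      rwa [hu] at this
    have hginv : 0 < (gauge C u)⁻¹ := by positivity
    nlinarith [mul_inv_cancel₀ hg.ne']
  · have h2 : 1 / R ≤ gauge C u := by
      have := le_gauge_of_subset_closedBall (x := u) habs hR.le hRsub
      rwa [hu] at this
    rw [inv_eq_one_div, div_le_iff₀ hg]
    rw [div_le_iff₀ hR] at h2
    linarith

end Aux

lemma rev_minkowski {α : Type*} [MeasurableSpace α] {μ : Measure α} {q : ℝ}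
    (hq0 : 0 < q) (hq1 : q ≤ 1) {f g h : α → ℝ}
    (hf0 : ∀ᵐ x ∂μ, 0 ≤ f x) (hg0 : ∀ᵐ x ∂μ, 0 ≤ g x)
    (hfg : ∀ᵐ x ∂μ, f x + g x ≤ h x)
    (hfi : Integrable (fun x => f x ^ q) μ) (hgi : Integrable (fun x => g x ^ q) μ)
    (hhi : Integrable (fun x => h x ^ q) μ) :
    (∫ x, f x ^ q ∂μ) ^ (1 / q) + (∫ x, g x ^ q ∂μ) ^ (1 / q)
      ≤ (∫ x, h x ^ q ∂μ) ^ (1 / q) := by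
  have hq0' : (0 : ℝ) < 1 / q := by positivity
  set IF := ∫ x, f x ^ q ∂μ with hIF
  set IG := ∫ x, g x ^ q ∂μ with hIG
  set IH := ∫ x, h x ^ q ∂μ with hIH
  have hIFnn : 0 ≤ IF := integral_nonneg_of_ae (hf0.mono fun x hx => rpow_nonneg hx q)
  have hIGnn : 0 ≤ IG := integral_nonneg_of_ae (hg0.mono fun x hx => rpow_nonneg hx q)
  have hgh : ∀ᵐ x ∂μ, g x ^ q ≤ h x ^ q := by
    filter_upwards [hf0, hg0, hfg] with x h1 h2 h3
    exact rpow_le_rpow h2 (by linarith) hq0.le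
  have hfh : ∀ᵐ x ∂μ, f x ^ q ≤ h x ^ q := by
    filter_upwards [hf0, hg0, hfg] with x h1 h2 h3
    exact rpow_le_rpow h1 (by linarith) hq0.le
  have hGH : IG ≤ IH := integral_mono_ae hgi hhi hgh
  have hFH : IF ≤ IH := integral_mono_ae hfi hhi hfh
  rcases eq_or_lt_of_le hIFnn with hF0 | hFpos
  · rw [← hF0, zero_rpow hq0'.ne', zero_add]
    exact rpow_le_rpow hIGnn hGH (by positivity)
  rcases eq_or_lt_of_le hIGnn with hG0 | hGpos
  · rw [← hG0, zero_rpow hq0'.ne', add_zero]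
    exact rpow_le_rpow hIFnn hFH (by positivity)
  set A := IF ^ (1 / q) with hA
  set B := IG ^ (1 / q) with hB
  have hApos : 0 < A := rpow_pos_of_pos hFpos _
  have hBpos : 0 < B := rpow_pos_of_pos hGpos _
  set S := A + B with hS
  have hSpos : 0 < S := by positivity
  set l := A / S with hl
  have hlpos : 0 < l := by positivity
  have hl1 : l < 1 := by
    rw [hl, div_lt_one hSpos]; linarith
  have h1l : 0 < 1 - l := by linarith
  have hpt : ∀ᵐ x ∂μ, l ^ (1 - q) * f x ^ q + (1 - l) ^ (1 - q) * g x ^ q ≤ h x ^ q := by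
    filter_upwards [hf0, hg0, hfg] with x ha hb hc
    have key : l ^ (1 - q) * f x ^ q + (1 - l) ^ (1 - q) * g x ^ q ≤ (f x + g x) ^ q := by
      have conc := (Real.concaveOn_rpow hq0.le hq1).2
        (Set.mem_Ici.2 (by positivity : (0:ℝ) ≤ f x / l))
        (Set.mem_Ici.2 (by positivity : (0:ℝ) ≤ g x / (1 - l))) hlpos.le h1l.le (by ring)
      simp only [smul_eq_mul] at conc
      have e1 : l * (f x / l) + (1 - l) * (g x / (1 - l)) = f x + g x := by
        field_simp
      rw [e1] at conc
      have e2 : l * (f x / l) ^ q = l ^ (1 - q) * f x ^ q := by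
        rw [div_rpow ha hlpos.le, rpow_sub hlpos, rpow_one]
        field_simp
      have e3 : (1 - l) * (g x / (1 - l)) ^ q = (1 - l) ^ (1 - q) * g x ^ q := by
        rw [div_rpow hb h1l.le, rpow_sub h1l, rpow_one]
        field_simp
      rw [e2, e3] at conc
      exact conc
    exact key.trans (rpow_le_rpow (by linarith) hc hq0.le)
  have hint : l ^ (1 - q) * IF + (1 - l) ^ (1 - q) * IG ≤ IH := by
    have hi : Integrable (fun x => l ^ (1 - q) * f x ^ q + (1 - l) ^ (1 - q) * g x ^ q) μ :=
      (hfi.const_mul _).add (hgi.const_mul _)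
    calc l ^ (1 - q) * IF + (1 - l) ^ (1 - q) * IG
        = ∫ x, (l ^ (1 - q) * f x ^ q + (1 - l) ^ (1 - q) * g x ^ q) ∂μ := by
          rw [integral_add (hfi.const_mul _) (hgi.const_mul _), integral_const_mul,
            integral_const_mul]
      _ ≤ IH := integral_mono_ae hi hhi hpt
  have hAq : A ^ q = IF := by
    rw [hA, ← rpow_mul hIFnn, one_div, inv_mul_cancel₀ hq0.ne', rpow_one]
  have hBq : B ^ q = IG := by
    rw [hB, ← rpow_mul hIGnn, one_div, inv_mul_cancel₀ hq0.ne', rpow_one]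
  have h1ml : 1 - l = B / S := by
    rw [hl]; field_simp; rw [hS]; ring
  have hsum : l ^ (1 - q) * IF + (1 - l) ^ (1 - q) * IG = S ^ q := by
    rw [← hAq, ← hBq, hl, h1ml, div_rpow hApos.le hSpos.le, div_rpow hBpos.le hSpos.le,
      div_mul_eq_mul_div, div_mul_eq_mul_div, ← rpow_add hApos, ← rpow_add hBpos,
      sub_add_cancel, rpow_one, rpow_one, ← add_div, ← hS,
      div_eq_iff (ne_of_gt (rpow_pos_of_pos hSpos _)), ← Real.rpow_add hSpos]
    have hq : q + (1 - q) = 1 := by ring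
    rw [hq, rpow_one]
  have hfinal : S ^ q ≤ IH := hsum ▸ hint
  calc A + B = ((S : ℝ) ^ q) ^ (1 / q) := by
        rw [← rpow_mul hSpos.le, mul_one_div, div_self hq0.ne', rpow_one]
    _ ≤ IH ^ (1 / q) := rpow_le_rpow (by positivity) hfinal hq0'.le

/-- For convex bodies `K, L` in `ℝⁿ` containing the origin in their interiors and
`0 < q ≤ 1`, the dual Brunn-Minkowski type inequality
`Ṽ_q(K + L)^{1/q} ≥ Ṽ_q(K)^{1/q} + Ṽ_q(L)^{1/q}` holds, where
`Ṽ_q(M) = (1/n) ∫_{Sⁿ⁻¹} ρ_M(u)^q du`. -/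
theorem dual_volume_brunn_minkowski {n : ℕ} (hn : 0 < n)
    (K L : Set (EuclideanSpace ℝ (Fin n)))
    (hKconv : Convex ℝ K) (hKcomp : IsCompact K) (hK0 : 0 ∈ interior K)
    (hLconv : Convex ℝ L) (hLcomp : IsCompact L) (hL0 : 0 ∈ interior L)
    (q : ℝ) (hq0 : 0 < q) (hq1 : q ≤ 1)
    (ρK ρL ρS : EuclideanSpace ℝ (Fin n) → ℝ)
    (hρK : ∀ u, ρK u = sSup {t : ℝ | 0 < t ∧ t • u ∈ K})
    (hρL : ∀ u, ρL u = sSup {t : ℝ | 0 < t ∧ t • u ∈ L})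
    (hρS : ∀ u, ρS u = sSup {t : ℝ | 0 < t ∧ t • u ∈ K + L}) :
    ((1 / n : ℝ) * ∫ u in Metric.sphere (0 : EuclideanSpace ℝ (Fin n)) 1,
          ρK u ^ q ∂(μH[(n : ℝ) - 1])) ^ (1 / q)
      + ((1 / n : ℝ) * ∫ u in Metric.sphere (0 : EuclideanSpace ℝ (Fin n)) 1,
          ρL u ^ q ∂(μH[(n : ℝ) - 1])) ^ (1 / q)
      ≤ ((1 / n : ℝ) * ∫ u in Metric.sphere (0 : EuclideanSpace ℝ (Fin n)) 1,
          ρS u ^ q ∂(μH[(n : ℝ) - 1])) ^ (1 / q) := by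
  -- K + L is a convex body containing 0 in its interior
  have hSconv : Convex ℝ (K + L) := hKconv.add hLconv
  have hScomp : IsCompact (K + L) := hKcomp.add hLcomp
  have hS0 : (0 : EuclideanSpace ℝ (Fin n)) ∈ interior (K + L) := by
    have h1 : (0 : EuclideanSpace ℝ (Fin n)) ∈ interior K + interior L := by
      have := Set.add_mem_add hK0 hL0
      rwa [add_zero] at this
    have h2 : interior K + interior L ⊆ interior (K + L) :=
      (Set.add_subset_add_left interior_subset).trans subset_interior_add_left
    exact h2 h1
  -- bounds
  obtain ⟨εK, RK, hεK, hRK, hbK⟩ := radial_bounds hKcomp hK0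
  obtain ⟨εL, RL, hεL, hRL, hbL⟩ := radial_bounds hLcomp hL0
  obtain ⟨εS, RS, hεS, hRS, hbS⟩ := radial_bounds hScomp hS0
  -- radial functions on the sphere
  have hsph : ∀ u : EuclideanSpace ℝ (Fin n), u ∈ Metric.sphere (0 : EuclideanSpace ℝ (Fin n)) 1 → ‖u‖ = 1 ∧ u ≠ 0 := by
    intro u hu
    have h1 : ‖u‖ = 1 := by rwa [mem_sphere_zero_iff_norm] at hu
    exact ⟨h1, fun h => by simp [h] at h1⟩
  have hKval : ∀ u : EuclideanSpace ℝ (Fin n), u ∈ Metric.sphere (0 : EuclideanSpace ℝ (Fin n)) 1 → ρK u = (gauge K u)⁻¹ := by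
    intro u hu
    obtain ⟨h1, hu0⟩ := hsph u hu
    obtain ⟨hset, hg⟩ := radial_set_eq hKconv hKcomp hK0 hu0
    rw [hρK u, hset, csSup_Ioc (by positivity)]
  have hLval : ∀ u : EuclideanSpace ℝ (Fin n), u ∈ Metric.sphere (0 : EuclideanSpace ℝ (Fin n)) 1 → ρL u = (gauge L u)⁻¹ := by
    intro u hu
    obtain ⟨h1, hu0⟩ := hsph u hu
    obtain ⟨hset, hg⟩ := radial_set_eq hLconv hLcomp hL0 hu0
    rw [hρL u, hset, csSup_Ioc (by positivity)]
  have hSval : ∀ u : EuclideanSpace ℝ (Fin n), u ∈ Metric.sphere (0 : EuclideanSpace ℝ (Fin n)) 1 → ρS u = (gauge (K + L) u)⁻¹ := by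
    intro u hu
    obtain ⟨h1, hu0⟩ := hsph u hu
    obtain ⟨hset, hg⟩ := radial_set_eq hSconv hScomp hS0 hu0
    rw [hρS u, hset, csSup_Ioc (by positivity)]
  -- superadditivity on the sphere
  have hsuper : ∀ u : EuclideanSpace ℝ (Fin n), u ∈ Metric.sphere (0 : EuclideanSpace ℝ (Fin n)) 1 → ρK u + ρL u ≤ ρS u := by
    intro u hu
    obtain ⟨h1, hu0⟩ := hsph u hu
    obtain ⟨hsetK, hgK⟩ := radial_set_eq hKconv hKcomp hK0 hu0
    obtain ⟨hsetL, hgL⟩ := radial_set_eq hLconv hLcomp hL0 hu0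
    obtain ⟨hsetS, hgS⟩ := radial_set_eq hSconv hScomp hS0 hu0
    have hKmem : (gauge K u)⁻¹ • u ∈ K := by
      have : (gauge K u)⁻¹ ∈ {t : ℝ | 0 < t ∧ t • u ∈ K} := by
        rw [hsetK]; exact ⟨by positivity, le_refl _⟩
      exact this.2
    have hLmem : (gauge L u)⁻¹ • u ∈ L := by
      have : (gauge L u)⁻¹ ∈ {t : ℝ | 0 < t ∧ t • u ∈ L} := by
        rw [hsetL]; exact ⟨by positivity, le_refl _⟩
      exact this.2
    have hmem : ((gauge K u)⁻¹ + (gauge L u)⁻¹) ∈ {t : ℝ | 0 < t ∧ t • u ∈ K + L} := by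
      refine ⟨by positivity, ?_⟩
      rw [add_smul]
      exact Set.add_mem_add hKmem hLmem
    rw [hsetS] at hmem
    rw [hKval u hu, hLval u hu, hSval u hu]
    exact hmem.2
  -- measurability
  have hmK : Measurable fun u : EuclideanSpace ℝ (Fin n) => (gauge K u)⁻¹ ^ q :=
    (Real.continuous_rpow_const hq0.le).measurable.comp
      ((continuous_gauge hKconv (mem_interior_iff_mem_nhds.1 hK0)).measurable.inv)
  have hmL : Measurable fun u : EuclideanSpace ℝ (Fin n) => (gauge L u)⁻¹ ^ q :=
    (Real.continuous_rpow_const hq0.le).measurable.comp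
      ((continuous_gauge hLconv (mem_interior_iff_mem_nhds.1 hL0)).measurable.inv)
  have hmS : Measurable fun u : EuclideanSpace ℝ (Fin n) => (gauge (K + L) u)⁻¹ ^ q :=
    (Real.continuous_rpow_const hq0.le).measurable.comp
      ((continuous_gauge hSconv (mem_interior_iff_mem_nhds.1 hS0)).measurable.inv)
  set μs := (μH[(n : ℝ) - 1] : Measure (EuclideanSpace ℝ (Fin n))).restrict (Metric.sphere (0 : EuclideanSpace ℝ (Fin n)) 1) with hμs
  have hsphm : MeasurableSet (Metric.sphere (0 : EuclideanSpace ℝ (Fin n)) 1) :=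
    (isClosed_sphere).measurableSet
  have hae : ∀ᵐ u ∂μs, u ∈ Metric.sphere (0 : EuclideanSpace ℝ (Fin n)) 1 := ae_restrict_mem hsphm
  have haeK : (fun u => ρK u ^ q) =ᵐ[μs] (fun u => (gauge K u)⁻¹ ^ q) := by
    filter_upwards [hae] with u hu; rw [hKval u hu]
  have haeL : (fun u => ρL u ^ q) =ᵐ[μs] (fun u => (gauge L u)⁻¹ ^ q) := by
    filter_upwards [hae] with u hu; rw [hLval u hu]
  have haeS : (fun u => ρS u ^ q) =ᵐ[μs] (fun u => (gauge (K + L) u)⁻¹ ^ q) := by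
    filter_upwards [hae] with u hu; rw [hSval u hu]
  have hamK : AEStronglyMeasurable (fun u => ρK u ^ q) μs :=
    hmK.aestronglyMeasurable.congr haeK.symm
  have hamL : AEStronglyMeasurable (fun u => ρL u ^ q) μs :=
    hmL.aestronglyMeasurable.congr haeL.symm
  have hamS : AEStronglyMeasurable (fun u => ρS u ^ q) μs :=
    hmS.aestronglyMeasurable.congr haeS.symm
  by_cases hfin : μs Set.univ < ⊤
  · -- finite measure case
    haveI : IsFiniteMeasure μs := ⟨hfin⟩
    have hboundK : ∀ᵐ u ∂μs, ‖ρK u ^ q‖ ≤ RK ^ q := by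
      filter_upwards [hae] with u hu
      obtain ⟨h1, _⟩ := hsph u hu
      obtain ⟨_, hlo, hhi⟩ := hbK u h1
      rw [hKval u hu, Real.norm_eq_abs, abs_of_nonneg (rpow_nonneg (by positivity) _)]
      exact rpow_le_rpow (by positivity) hhi hq0.le
    have hboundL : ∀ᵐ u ∂μs, ‖ρL u ^ q‖ ≤ RL ^ q := by
      filter_upwards [hae] with u hu
      obtain ⟨h1, _⟩ := hsph u hu
      obtain ⟨_, hlo, hhi⟩ := hbL u h1
      rw [hLval u hu, Real.norm_eq_abs, abs_of_nonneg (rpow_nonneg (by positivity) _)]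
      exact rpow_le_rpow (by positivity) hhi hq0.le
    have hboundS : ∀ᵐ u ∂μs, ‖ρS u ^ q‖ ≤ RS ^ q := by
      filter_upwards [hae] with u hu
      obtain ⟨h1, _⟩ := hsph u hu
      obtain ⟨_, hlo, hhi⟩ := hbS u h1
      rw [hSval u hu, Real.norm_eq_abs, abs_of_nonneg (rpow_nonneg (by positivity) _)]
      exact rpow_le_rpow (by positivity) hhi hq0.le
    have hiK : Integrable (fun u => ρK u ^ q) μs :=
      Integrable.mono' (integrable_const _) hamK hboundK
    have hiL : Integrable (fun u => ρL u ^ q) μs :=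
      Integrable.mono' (integrable_const _) hamL hboundL
    have hiS : Integrable (fun u => ρS u ^ q) μs :=
      Integrable.mono' (integrable_const _) hamS hboundS
    have hf0 : ∀ᵐ u ∂μs, 0 ≤ ρK u := by
      filter_upwards [hae] with u hu
      rw [hKval u hu]
      have := (hsph u hu).1
      obtain ⟨hg, _, _⟩ := hbK u this
      positivity
    have hg0 : ∀ᵐ u ∂μs, 0 ≤ ρL u := by
      filter_upwards [hae] with u hu
      rw [hLval u hu]
      have := (hsph u hu).1
      obtain ⟨hg, _, _⟩ := hbL u this
      positivity
    have hfg : ∀ᵐ u ∂μs, ρK u + ρL u ≤ ρS u := by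
      filter_upwards [hae] with u hu
      exact hsuper u hu
    have hmain := rev_minkowski hq0 hq1 hf0 hg0 hfg hiK hiL hiS
    have hInn : (0:ℝ) ≤ 1 / (n : ℝ) := by positivity
    have hIKnn : 0 ≤ ∫ u, ρK u ^ q ∂μs :=
      integral_nonneg_of_ae (hf0.mono fun u hu => rpow_nonneg hu q)
    have hILnn : 0 ≤ ∫ u, ρL u ^ q ∂μs :=
      integral_nonneg_of_ae (hg0.mono fun u hu => rpow_nonneg hu q)
    have hISnn : 0 ≤ ∫ u, ρS u ^ q ∂μs := by
      refine integral_nonneg_of_ae ?_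
      filter_upwards [hf0, hg0, hfg] with u h1 h2 h3
      exact rpow_nonneg (by linarith) q
    rw [Real.mul_rpow hInn hIKnn, Real.mul_rpow hInn hILnn, Real.mul_rpow hInn hISnn,
      ← mul_add]
    exact mul_le_mul_of_nonneg_left hmain (by positivity)
  · -- infinite measure case: all integrals vanish
    push_neg at hfin
    have hnotint : ∀ (f : EuclideanSpace ℝ (Fin n) → ℝ) (ε : ℝ), 0 < ε →
        (∀ᵐ u ∂μs, ε ≤ f u) → ¬ Integrable f μs := by
      intro f ε hε hbd hint
      have hconst : Integrable (fun _ : EuclideanSpace ℝ (Fin n) => ε) μs := by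
        refine Integrable.mono' hint aestronglyMeasurable_const ?_
        filter_upwards [hbd] with u hu
        rwa [Real.norm_eq_abs, abs_of_pos hε]
      rw [integrable_const_iff] at hconst
      rcases hconst with h | h
      · exact hε.ne' h
      · exact absurd h.measure_univ_lt_top (by simp [top_le_iff.1 hfin])
    have hzK : ¬ Integrable (fun u => ρK u ^ q) μs := by
      refine hnotint _ (εK ^ q) (by positivity) ?_
      filter_upwards [hae] with u hu
      obtain ⟨h1, _⟩ := hsph u hu
      obtain ⟨hg, hlo, hhi⟩ := hbK u h1
      rw [hKval u hu]
      exact rpow_le_rpow hεK.le hlo hq0.le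
    have hzL : ¬ Integrable (fun u => ρL u ^ q) μs := by
      refine hnotint _ (εL ^ q) (by positivity) ?_
      filter_upwards [hae] with u hu
      obtain ⟨h1, _⟩ := hsph u hu
      obtain ⟨hg, hlo, hhi⟩ := hbL u h1
      rw [hLval u hu]
      exact rpow_le_rpow hεL.le hlo hq0.le
    have hzS : ¬ Integrable (fun u => ρS u ^ q) μs := by
      refine hnotint _ (εS ^ q) (by positivity) ?_
      filter_upwards [hae] with u hu
      obtain ⟨h1, _⟩ := hsph u hu
      obtain ⟨hg, hlo, hhi⟩ := hbS u h1
      rw [hSval u hu]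
      exact rpow_le_rpow hεS.le hlo hq0.le
    rw [integral_undef hzK, integral_undef hzL, integral_undef hzS, mul_zero,
      Real.zero_rpow (by positivity : (0:ℝ) < 1/q).ne', add_zero]
end
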